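/- Let q ≡ 3 (mod 4) be an odd prime power with q ≠ 3, and let β₁, β₂ ∈ NQR(q) \ {−1} with β₁ ≠ β₂. Then the one-factorizations of the complete graph on F ∪ {∞} generated by the starters S_{β₁} and S_{β₂} are orthogonal: for all γ, δ ∈ F, the one-factors F^{β₁}_γ and F^{β₂}_δ share at most one edge. -/

import Mathlib

/-- The set of nonzero squares (quadratic residues) of a field. -/
def QR (F : Type*) [Field F] : Set F := {x | x ≠ 0 ∧ ∃ y, y ^ 2 = x}

/-- The set of nonzero non-squares of a field. -/
def NQR (F : Type*) [Field F] : Set F := {x | x ≠ 0 ∧ ¬ ∃ y, y ^ 2 = x}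

/-- A graph has a cycle of length 4. -/
def HasC4 {V : Type*} (G : SimpleGraph V) : Prop :=
  ∃ (v : V) (c : G.Walk v v), c.IsCycle ∧ c.length = 4

/-- The one-factor `F^β_γ = {{∞, γ}} ∪ {{x+γ, xβ+γ} : x ∈ QR(q)}` on `F ∪ {∞}`
(with `∞ = none`), of the one-factorization generated by the starter `S_β`. -/
def starterFactor {F : Type*} [Field F] (β γ : F) : Set (Sym2 (Option F)) :=
  {s(none, some γ)} ∪ {e | ∃ x ∈ QR F, e = s(some (x + γ), some (x * β + γ))}

/-- The one-factor `G^β_γ = {{∞, γ}} ∪ {{-x+γ, -xβ+γ} : x ∈ QR(q)}`, of the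
one-factorization generated by the starter `-S_β`. -/
def negStarterFactor {F : Type*} [Field F] (β γ : F) : Set (Sym2 (Option F)) :=
  {s(none, some γ)} ∪ {e | ∃ x ∈ QR F, e = s(some (-x + γ), some (-(x * β) + γ))}

lemma QR_iff {F : Type*} [Field F] (x : F) : x ∈ QR F ↔ x ≠ 0 ∧ IsSquare x := by
  unfold QR
  simp only [Set.mem_setOf_eq, and_congr_right_iff]
  intro _
  constructor
  · rintro ⟨y, rfl⟩; exact ⟨y, (sq y)⟩
  · rintro ⟨r, rfl⟩; exact ⟨r, sq r⟩

lemma NQR_iff {F : Type*} [Field F] (x : F) : x ∈ NQR F ↔ x ≠ 0 ∧ ¬ IsSquare x := by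
  unfold NQR
  simp only [Set.mem_setOf_eq, and_congr_right_iff]
  intro _
  constructor
  · rintro h ⟨r, rfl⟩; exact h ⟨r, sq r⟩
  · rintro h ⟨y, rfl⟩; exact h ⟨y, sq y⟩

lemma mul_nonsquare {F : Type*} [Field F] {a b : F} (ha : IsSquare a) (ha0 : a ≠ 0)
    (hb : ¬ IsSquare b) : ¬ IsSquare (a * b) := by
  intro h
  apply hb
  have := (ha.inv).mul h
  rwa [← mul_assoc, inv_mul_cancel₀ ha0, one_mul] at this

/-- **Theorem (Horton).** If `q ≡ 3 (mod 4)` is an odd prime power, `q ≠ 3`, and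
`β₁, β₂ ∈ NQR(q) \ {-1}` are distinct, then the one-factorizations generated by the
starters `S_{β₁}` and `S_{β₂}` are orthogonal. -/
theorem starters_orthogonal (q : ℕ) (hq : q % 4 = 3) (hq3 : q ≠ 3)
    (F : Type*) [Field F] [Fintype F] (hcard : Fintype.card F = q)
    (β₁ β₂ : F) (h₁ : β₁ ∈ NQR F) (h₁' : β₁ ≠ -1)
    (h₂ : β₂ ∈ NQR F) (h₂' : β₂ ≠ -1) (hne : β₁ ≠ β₂) :
    ∀ γ δ : F, Set.Subsingleton (starterFactor β₁ γ ∩ starterFactor β₂ δ) := by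
  -- basic square facts
  have hm1 : ¬ IsSquare (-1 : F) := by
    rw [FiniteField.isSquare_neg_one_iff, hcard, hq]
    simp
  rw [NQR_iff] at h₁ h₂
  obtain ⟨hβ₁0, hs₁⟩ := h₁
  obtain ⟨hβ₂0, hs₂⟩ := h₂
  have hβ₁1 : β₁ ≠ 1 := fun h => hs₁ (h ▸ IsSquare.one)
  have hβ₂1 : β₂ ≠ 1 := fun h => hs₂ (h ▸ IsSquare.one)
  intro γ δ
  -- A cleaner description of membership in the intersection:
  -- either the infinite edge (forcing γ = δ) or a finite edge with its pair of equations.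
  have key : ∀ e ∈ starterFactor β₁ γ ∩ starterFactor β₂ δ,
      (e = s(none, some γ) ∧ γ = δ) ∨
      (∃ x ∈ QR F, ∃ y ∈ QR F, e = s(some (x + γ), some (x * β₁ + γ)) ∧
        ((x + γ = y + δ ∧ x * β₁ + γ = y * β₂ + δ) ∨
         (x + γ = y * β₂ + δ ∧ x * β₁ + γ = y + δ))) := by
    rintro e ⟨he₁, he₂⟩
    simp only [starterFactor, Set.mem_union, Set.mem_singleton_iff, Set.mem_setOf_eq] at he₁ he₂
    rcases he₁ with rfl | ⟨x, hx, rfl⟩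
    · rcases he₂ with h | ⟨y, hy, h⟩
      · rw [Sym2.eq_iff] at h
        rcases h with ⟨_, h⟩ | ⟨h, _⟩
        · exact Or.inl ⟨rfl, Option.some.inj h⟩
        · exact absurd h (by simp)
      · rw [Sym2.eq_iff] at h
        rcases h with ⟨h, _⟩ | ⟨h, _⟩ <;> exact absurd h (by simp)
    · rcases he₂ with h | ⟨y, hy, h⟩
      · rw [Sym2.eq_iff] at h
        rcases h with ⟨h, _⟩ | ⟨_, h⟩ <;> exact absurd h (by simp)
      · refine Or.inr ⟨x, hx, y, hy, rfl, ?_⟩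
        rw [Sym2.eq_iff] at h
        rcases h with ⟨ha, hb⟩ | ⟨ha, hb⟩
        · exact Or.inl ⟨Option.some.inj ha, Option.some.inj hb⟩
        · exact Or.inr ⟨Option.some.inj ha, Option.some.inj hb⟩
  -- the finite-edge equations with γ = δ are impossible
  have no_mixed : ∀ x ∈ QR F, ∀ y ∈ QR F, γ = δ →
      ¬ ((x + γ = y + δ ∧ x * β₁ + γ = y * β₂ + δ) ∨
         (x + γ = y * β₂ + δ ∧ x * β₁ + γ = y + δ)) := by
    rintro x hx y hy rfl (⟨ha, hb⟩ | ⟨ha, hb⟩)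
    · have hxy : x = y := add_right_cancel ha
      subst hxy
      have hy0 : x ≠ 0 := ((QR_iff x).mp hx).1
      exact hne (mul_left_cancel₀ hy0 (by linear_combination hb))
    · -- x = y * β₂, so x would be a nonsquare
      have hxe : x = y * β₂ := add_right_cancel ha
      obtain ⟨hy0, hys⟩ := (QR_iff y).mp hy
      obtain ⟨hx0, hxs⟩ := (QR_iff x).mp hx
      exact mul_nonsquare hys hy0 hs₂ (hxe ▸ hxs)
  intro e₁ he₁ e₂ he₂
  rcases key e₁ he₁ with ⟨rfl, hγδ⟩ | ⟨x₁, hx₁, y₁, hy₁, rfl, hc₁⟩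
  · rcases key e₂ he₂ with ⟨rfl, _⟩ | ⟨x₂, hx₂, y₂, hy₂, rfl, hc₂⟩
    · rfl
    · exact absurd hc₂ (no_mixed x₂ hx₂ y₂ hy₂ hγδ)
  · rcases key e₂ he₂ with ⟨rfl, hγδ⟩ | ⟨x₂, hx₂, y₂, hy₂, rfl, hc₂⟩
    · exact absurd hc₁ (no_mixed x₁ hx₁ y₁ hy₁ hγδ)
    · -- both finite; show x₁ = x₂
      obtain ⟨hx₁0, hx₁s⟩ := (QR_iff x₁).mp hx₁
      obtain ⟨hx₂0, hx₂s⟩ := (QR_iff x₂).mp hx₂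
      obtain ⟨hy₁0, hy₁s⟩ := (QR_iff y₁).mp hy₁
      obtain ⟨hy₂0, hy₂s⟩ := (QR_iff y₂).mp hy₂
      have hxx : x₁ = x₂ := by
        rcases hc₁ with ⟨ha₁, hb₁⟩ | ⟨ha₁, hb₁⟩ <;>
          rcases hc₂ with ⟨ha₂, hb₂⟩ | ⟨ha₂, hb₂⟩
        · -- AA
          have h : (x₁ - x₂) * (β₁ - β₂) = 0 := by
            linear_combination (hb₁ - hb₂) - β₂ * (ha₁ - ha₂)
          rcases mul_eq_zero.mp h with h | h
          · exact sub_eq_zero.mp h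
          · exact absurd (sub_eq_zero.mp h) hne
        · -- AB : contradiction
          have h : (β₁ - 1) * (x₁ * y₂ + x₂ * y₁) = 0 := by
            linear_combination y₂ * (hb₁ - ha₁) + y₁ * (hb₂ - ha₂)
          have h2 : x₁ * y₂ = (x₂ * y₁) * (-1) := by
            rcases mul_eq_zero.mp h with h | h
            · exact absurd (sub_eq_zero.mp h) hβ₁1
            · linear_combination h
          exact absurd (h2 ▸ hx₁s.mul hy₂s)
            (mul_nonsquare (hx₂s.mul hy₁s) (mul_ne_zero hx₂0 hy₁0) hm1)
        · -- BA : contradiction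
          have h : (β₁ - 1) * (x₂ * y₁ + x₁ * y₂) = 0 := by
            linear_combination y₁ * (hb₂ - ha₂) + y₂ * (hb₁ - ha₁)
          have h2 : x₂ * y₁ = (x₁ * y₂) * (-1) := by
            rcases mul_eq_zero.mp h with h | h
            · exact absurd (sub_eq_zero.mp h) hβ₁1
            · linear_combination h
          exact absurd (h2 ▸ hx₂s.mul hy₁s)
            (mul_nonsquare (hx₁s.mul hy₂s) (mul_ne_zero hx₁0 hy₂0) hm1)
        · -- BB
          have h : (x₁ - x₂) * (β₁ * β₂ - 1) = 0 := by
            linear_combination β₂ * (hb₁ - hb₂) - (ha₁ - ha₂)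
          rcases mul_eq_zero.mp h with h | h
          · exact sub_eq_zero.mp h
          · -- β₁ * β₂ = 1 : contradiction with squareness using one B-pair
            exfalso
            have hββ : β₁ * β₂ = 1 := sub_eq_zero.mp h
            have hy1e : y₁ = x₁ * β₁ := by
              have h3 : (1 - β₁) * (x₁ * β₁ - y₁) = 0 := by
                linear_combination β₁ * (ha₁ - hb₁) + y₁ * hββ
              rcases mul_eq_zero.mp h3 with h3 | h3
              · exact absurd (sub_eq_zero.mp h3).symm hβ₁1
              · exact (sub_eq_zero.mp h3).symm
            exact mul_nonsquare hx₁s hx₁0 hs₁ (hy1e ▸ hy₁s)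
      rw [hxx]
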